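/- arXiv:0903.3729 — 3 statements merged into one kernel-verified Lean document; each statement's English description precedes it below -/
import Mathlib

section
/- Let h : V → V be a surjective map of a set V with finite fibers in the following sense: V is a Noetherian topological space, h is continuous, closed, surjective, and the image of any irreducible closed subset is irreducible closed of the same dimension behavior; suppose B ⊆ V is a closed subset with h⁻¹(B) ⊆ B. Then h⁻¹(B) = B, and the map Γ ↦ closure of h(Γ) induces a bijection on the set of irreducible components of B. -/
/-!
The closed sets `h^[n] ⁻¹' B` form a decreasing chain, which stabilises since `V` is Noetherian;
as `h` is surjective this forces `h ⁻¹' B = B`, hence `h '' B = B`. Every irreducible component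
of `B = h '' B` then lies in the finite union of the closed irreducible sets `h '' Γ`, `Γ` a
component of `B`, so it is one of them. Thus `Γ ↦ h '' Γ` maps the finite set of components
onto itself, and is therefore a bijection.
-/

open Set

/-- The irreducible components of a closed subset `B`: maximal subsets of `B`
that are irreducible and closed. -/
def irrComps {V : Type*} [TopologicalSpace V] (B : Set V) : Set (Set V) :=
  {Γ | Maximal (fun s => s ⊆ B ∧ IsIrreducible s ∧ IsClosed s) Γ}

open TopologicalSpace

section Components

variable {X : Type*} [TopologicalSpace X]

theorem IsIrreducible.exists_mem_subset_of_subset_sUnion {s : Set X} {S : Set (Set X)}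
    (hs : IsIrreducible s) (hSf : S.Finite) (hSc : ∀ t ∈ S, IsClosed t) (hsS : s ⊆ ⋃₀ S) :
    ∃ t ∈ S, s ⊆ t := by
  lift S to Finset (Set X) using hSf
  exact isIrreducible_iff_sUnion_isClosed.1 hs S hSc hsS

variable [NoetherianSpace X] {C : Set X}

theorem exists_mem_irrComps_superset (hC : IsClosed C) {s : Set X} (hsC : s ⊆ C)
    (hs : IsIrreducible s) : ∃ Γ ∈ irrComps C, s ⊆ Γ := by
  obtain ⟨S, hSf, hSc, hSi, rfl⟩ := NoetherianSpace.exists_finite_set_isClosed_irreducible hC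
  obtain ⟨z, hzS, hsz⟩ := hs.exists_mem_subset_of_subset_sUnion hSf hSc hsC
  obtain ⟨Γ, hzΓ, hΓ⟩ := hSf.exists_le_maximal hzS
  refine ⟨Γ, ⟨⟨subset_sUnion_of_mem hΓ.1, hSi _ hΓ.1, hSc _ hΓ.1⟩, ?_⟩, hsz.trans hzΓ⟩
  rintro t ⟨htS, hti, -⟩ hΓt
  obtain ⟨w, hwS, htw⟩ := hti.exists_mem_subset_of_subset_sUnion hSf hSc htS
  exact htw.trans (hΓ.2 hwS (hΓt.trans htw))

theorem finite_irrComps (hC : IsClosed C) : (irrComps C).Finite := by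
  obtain ⟨S, hSf, hSc, hSi, rfl⟩ := NoetherianSpace.exists_finite_set_isClosed_irreducible hC
  refine hSf.subset fun Γ hΓ => ?_
  obtain ⟨z, hzS, hΓz⟩ := hΓ.1.2.1.exists_mem_subset_of_subset_sUnion hSf hSc hΓ.1.1
  rwa [hΓz.antisymm (hΓ.2 ⟨subset_sUnion_of_mem hzS, hSi z hzS, hSc z hzS⟩ hΓz)]

theorem sUnion_irrComps (hC : IsClosed C) : ⋃₀ irrComps C = C := by
  refine (sUnion_subset fun Γ hΓ => hΓ.1.1).antisymm fun x hx => ?_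
  obtain ⟨Γ, hΓ, hxΓ⟩ :=
    exists_mem_irrComps_superset hC (singleton_subset_iff.2 hx) isIrreducible_singleton
  exact ⟨Γ, hΓ, hxΓ rfl⟩

theorem irrComps_image_subset {Y : Type*} [TopologicalSpace Y] {h : X → Y} (hcont : Continuous h)
    (hclosed : IsClosedMap h) (hC : IsClosed C) :
    irrComps (h '' C) ⊆ (h '' ·) '' irrComps C := by
  rintro Γ' ⟨⟨hΓ'C, hΓ'i, -⟩, hΓ'max⟩
  have hcover : Γ' ⊆ ⋃₀ ((h '' ·) '' irrComps C) := by
    rwa [← image_sUnion, sUnion_irrComps hC]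
  obtain ⟨_, ⟨Γ, hΓ, rfl⟩, hΓ'Γ⟩ := hΓ'i.exists_mem_subset_of_subset_sUnion
    ((finite_irrComps hC).image _) (forall_mem_image.2 fun Γ hΓ => hclosed _ hΓ.1.2.2) hcover
  obtain ⟨hΓC, hΓi, hΓc⟩ := hΓ.1
  refine ⟨Γ, hΓ, (hΓ'max ⟨image_mono hΓC, hΓi.image h hcont.continuousOn, hclosed _ hΓc⟩
    hΓ'Γ).antisymm hΓ'Γ⟩

end Components

theorem Set.Finite.bijOn_of_subset_image {α : Type*} {s : Set α} {f : α → α} (hs : s.Finite)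
    (hsub : s ⊆ f '' s) : BijOn f s s := by
  have himage : f '' s = s :=
    (eq_of_subset_of_ncard_le hsub (ncard_image_le hs) (hs.image f)).symm
  exact (hs.surjOn_iff_bijOn_of_mapsTo (mapsTo_iff_image_subset.2 himage.le)).1 hsub

theorem preimage_eq_of_preimage_subset {X : Type*} [TopologicalSpace X] [NoetherianSpace X]
    {h : X → X} (hcont : Continuous h) (hsurj : Function.Surjective h) {B : Set X}
    (hB : IsClosed B) (hpre : h ⁻¹' B ⊆ B) : h ⁻¹' B = B := by
  let chain : ℕ → Closeds X := fun n => ⟨h^[n] ⁻¹' B, hB.preimage (hcont.iterate n)⟩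
  have hsucc (n : ℕ) : h^[n + 1] ⁻¹' B = h^[n] ⁻¹' (h ⁻¹' B) := by
    rw [Function.iterate_succ', preimage_comp]
  have hanti : Antitone chain := antitone_nat_of_succ_le fun n => by
    change h^[n + 1] ⁻¹' B ⊆ h^[n] ⁻¹' B
    rw [hsucc]
    exact preimage_mono hpre
  obtain ⟨n, hn⟩ := WellFoundedLT.antitone_chain_condition hanti
  have hstable : h^[n] ⁻¹' B = h^[n + 1] ⁻¹' B := congrArg SetLike.coe (hn (n + 1) n.le_succ)
  rw [hsucc] at hstable
  exact ((hsurj.iterate n).preimage_injective hstable).symm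

theorem stmt1_general {V : Type*} [TopologicalSpace V] [TopologicalSpace.NoetherianSpace V]
    (h : V → V) (hcont : Continuous h) (hclosed : IsClosedMap h)
    (hsurj : Function.Surjective h)
    (B : Set V) (hB : IsClosed B) (hpre : h ⁻¹' B ⊆ B) :
    h ⁻¹' B = B ∧
      Set.BijOn (fun Γ : Set V => closure (h '' Γ)) (irrComps B) (irrComps B) := by
  have hfix := preimage_eq_of_preimage_subset hcont hsurj hB hpre
  have himage : h '' B = B := by
    nth_rewrite 1 [← hfix]
    exact image_preimage_eq B hsurj
  have hbij : BijOn (h '' ·) (irrComps B) (irrComps B) :=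
    (finite_irrComps hB).bijOn_of_subset_image <| by
      simpa only [himage] using irrComps_image_subset hcont hclosed hB
  refine ⟨hfix, hbij.congr fun Γ hΓ => ?_⟩
  exact (hclosed _ hΓ.1.2.2).closure_eq.symm

/-- Let `V` be a Noetherian topological space and `h : V → V` a continuous
closed surjection such that for every irreducible closed `Γ ⊆ V`, the image `h '' Γ` is
irreducible, closed, of the same Krull dimension, and every irreducible component of
`h ⁻¹' Γ` dominating `Γ` has dimension `dim Γ`.  If `B ⊆ V` is closed with `h ⁻¹' B ⊆ B`,
then `h ⁻¹' B = B` and `Γ ↦ closure (h '' Γ)` induces a bijection of the set of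
irreducible components of `B` onto itself. -/
theorem stmt1 {V : Type*} [TopologicalSpace V] [TopologicalSpace.NoetherianSpace V]
    (h : V → V) (hcont : Continuous h) (hclosed : IsClosedMap h)
    (hsurj : Function.Surjective h)
    (himg : ∀ Γ : Set V, IsIrreducible Γ → IsClosed Γ →
      IsIrreducible (h '' Γ) ∧ IsClosed (h '' Γ) ∧
        topologicalKrullDim ↥(h '' Γ) = topologicalKrullDim ↥Γ)
    (hdom : ∀ Γ : Set V, IsIrreducible Γ → IsClosed Γ →
      ∀ Δ ∈ irrComps (h ⁻¹' Γ), h '' Δ = Γ →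
        topologicalKrullDim ↥Δ = topologicalKrullDim ↥Γ)
    (B : Set V) (hB : IsClosed B) (hpre : h ⁻¹' B ⊆ B) :
    h ⁻¹' B = B ∧
      Set.BijOn (fun Γ : Set V => closure (h '' Γ)) (irrComps B) (irrComps B) :=
  stmt1_general h hcont hclosed hsurj B hB hpre
end

section
/- Let V be a finite-dimensional real vector space, C ⊆ V a closed strictly convex cone with C + (−C) = V, and φ : V → V a linear endomorphism with φ(C) ⊆ C. Let ‖·‖ be any norm on V, χ : V → ℝ a linear form with χ > 0 on C \ {0}, and u a point in the topological interior of C. Then ρ(φ) = lim_{m→∞} ‖φ^m(u)‖^{1/m} = lim_{m→∞} χ(φ^m(u))^{1/m}, where ρ(φ) is the spectral radius of φ. -/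
/-!
Since `u` is interior, `u ± x ∈ C` for small `x`, and by compactness of `C ∩ sphere` the form
`χ` dominates a multiple of the norm on `C`. Writing `2 φᵐ x = φᵐ (u + x) - φᵐ (u - x)` this
gives `‖φᵐ‖ ≲ χ (φᵐ u) ≲ ‖φᵐ u‖ ≲ ‖φᵐ‖`, so the three sequences have the same growth and their
`m`-th roots share a limit. Comparing `φᵐ` with the powers of the complexified matrix of `φ`,
Gelfand's formula identifies that limit with the spectral radius.
-/

open TensorProduct Filter

/-- The spectral radius of a linear endomorphism of a real vector space: the supremum of
the absolute values of the complex eigenvalues of its complexification. -/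
noncomputable def specRadR {V : Type*} [AddCommGroup V] [Module ℝ V]
    (φ : V →ₗ[ℝ] V) : ℝ :=
  sSup {r : ℝ | ∃ μ : ℂ,
    Module.End.HasEigenvalue (LinearMap.baseChange ℂ φ : Module.End ℂ (ℂ ⊗[ℝ] V)) μ ∧
      r = ‖μ‖}

open Asymptotics Topology

theorem tendsto_rpow_inv_of_isTheta {f g : ℕ → ℝ} (hf : 0 ≤ f) (hg : 0 ≤ g)
    (hfg : f =Θ[atTop] g) {r : ℝ}
    (hr : Tendsto (fun m : ℕ => g m ^ (m : ℝ)⁻¹) atTop (𝓝 r)) :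
    Tendsto (fun m : ℕ => f m ^ (m : ℝ)⁻¹) atTop (𝓝 r) := by
  have scaled : ∀ c : ℝ, 0 < c → Tendsto (fun m : ℕ => (c * g m) ^ (m : ℝ)⁻¹) atTop (𝓝 r) := by
    intro c hc
    have hinv : Tendsto (fun m : ℕ => (m : ℝ)⁻¹) atTop (𝓝 0) :=
      tendsto_inv_atTop_zero.comp tendsto_natCast_atTop_atTop
    have := (tendsto_const_nhds (x := c)).rpow hinv (Or.inl hc.ne') |>.mul hr
    rw [Real.rpow_zero, one_mul] at this
    exact this.congr fun m => (Real.mul_rpow hc.le (hg m)).symm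
  obtain ⟨c, hc, hfg'⟩ := hfg.1.exists_pos
  obtain ⟨c', hc', hgf⟩ := hfg.2.exists_pos
  refine tendsto_of_tendsto_of_tendsto_of_le_of_le' (scaled c'⁻¹ (inv_pos.2 hc')) (scaled c hc)
    ?_ ?_
  · filter_upwards [hgf.bound] with m hm
    rw [Real.norm_of_nonneg (hg m), Real.norm_of_nonneg (hf m)] at hm
    exact Real.rpow_le_rpow (mul_nonneg (inv_nonneg.2 hc'.le) (hg m))
      ((inv_mul_le_iff₀ hc').2 hm) (by positivity)
  · filter_upwards [hfg'.bound] with m hm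
    rw [Real.norm_of_nonneg (hg m), Real.norm_of_nonneg (hf m)] at hm
    exact Real.rpow_le_rpow (hf m) hm (by positivity)

theorem LinearMap.isTheta_comp_of_injective {𝕜 E F α : Type*} [NontriviallyNormedField 𝕜]
    [CompleteSpace 𝕜] [NormedAddCommGroup E] [NormedSpace 𝕜 E] [FiniteDimensional 𝕜 E]
    [NormedAddCommGroup F] [NormedSpace 𝕜 F] [FiniteDimensional 𝕜 F]
    {L : E →ₗ[𝕜] F} (hL : Function.Injective L) (l : Filter α) (x : α → E) :
    (fun a => L (x a)) =Θ[l] x := by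
  obtain ⟨g, hg⟩ := L.exists_leftInverse_of_injective (LinearMap.ker_eq_bot.2 hL)
  refine ⟨(LinearMap.toContinuousLinearMap L).isBigO_comp x l, ?_⟩
  have := (LinearMap.toContinuousLinearMap g).isBigO_comp (fun a => L (x a)) l
  simpa [← LinearMap.comp_apply, hg] using this

theorem toReal_spectralRadius_eq_sSup {𝕜 A : Type*} [NormedField 𝕜] [Ring A] [Algebra 𝕜 A]
    (a : A) : (spectralRadius 𝕜 a).toReal = sSup (norm '' spectrum 𝕜 a) := by
  rw [spectralRadius, ← sSup_image, ENNReal.toReal_sSup _ (by simp), Set.image_image]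
  simp

theorem tendsto_norm_pow_rpow_inv_toReal_spectralRadius {A : Type*} [NormedRing A]
    [NormedAlgebra ℂ A] [CompleteSpace A] (a : A) :
    Tendsto (fun m : ℕ => ‖a ^ m‖ ^ (m : ℝ)⁻¹) atTop (𝓝 (spectralRadius ℂ a).toReal) := by
  have hfin : spectralRadius ℂ a ≠ ⊤ :=
    ne_top_of_le_ne_top (by simp [ENNReal.mul_eq_top])
      (spectrum.spectralRadius_le_pow_nnnorm_pow_one_div ℂ a 0)
  refine ((ENNReal.tendsto_toReal hfin).comp
    (spectrum.pow_norm_pow_one_div_tendsto_nhds_spectralRadius a)).congr fun m => ?_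
  simp [ENNReal.toReal_ofReal (Real.rpow_nonneg (norm_nonneg _) _)]

theorem specRadR_eq_toReal_spectralRadius {V : Type*} [AddCommGroup V] [Module ℝ V]
    [FiniteDimensional ℝ V] (φ : V →ₗ[ℝ] V) :
    specRadR φ = (spectralRadius ℂ (φ.baseChange ℂ)).toReal := by
  rw [toReal_spectralRadius_eq_sSup, specRadR]
  congr 1
  ext r
  simp [Module.End.hasEigenvalue_iff_mem_spectrum, eq_comm]

theorem spectrum_baseChange_eq_spectrum_map_toMatrix {R A M ι : Type*} [CommRing R] [CommRing A]
    [Algebra R A] [AddCommGroup M] [Module R M] [Fintype ι] [DecidableEq ι] (b : Module.Basis ι R M)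
    (φ : M →ₗ[R] M) :
    spectrum A (φ.baseChange A) = spectrum A ((LinearMap.toMatrix b b φ).map (algebraMap R A)) := by
  rw [← LinearMap.toMatrix_baseChange]
  exact (AlgEquiv.spectrum_eq (LinearMap.toMatrixAlgEquiv _) _).symm

section

attribute [local instance] Matrix.linftyOpNormedAddCommGroup Matrix.linftyOpNormedSpace
  Matrix.linftyOpNormedRing Matrix.linftyOpNormedAlgebra

theorem ContinuousLinearMap.tendsto_norm_pow_rpow_inv_specRadR {V : Type*} [NormedAddCommGroup V]
    [NormedSpace ℝ V] [FiniteDimensional ℝ V] (φ : V →L[ℝ] V) :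
    Tendsto (fun m : ℕ => ‖φ ^ m‖ ^ (m : ℝ)⁻¹) atTop (𝓝 (specRadR (φ : V →ₗ[ℝ] V))) := by
  let b := Module.finBasis ℝ V
  let Φ : (V →L[ℝ] V) →ₐ[ℝ] Matrix (Fin _) (Fin _) ℂ :=
    (Algebra.ofId ℝ ℂ).mapMatrix.comp
      ((LinearMap.toMatrixAlgEquiv b).toAlgHom.comp
        (Module.End.toContinuousLinearMap V).symm.toAlgHom)
  have hΦ : Function.Injective Φ :=
    (Matrix.map_injective (algebraMap ℝ ℂ).injective).comp
      ((LinearMap.toMatrixAlgEquiv b).injective.comp (AlgEquiv.injective _))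
  have hΘ : (fun m : ℕ => ‖φ ^ m‖) =Θ[atTop] (fun m => ‖Φ φ ^ m‖) := by
    have h : (fun m : ℕ => Φ.toLinearMap (φ ^ m)) =Θ[atTop] (φ ^ ·) :=
      LinearMap.isTheta_comp_of_injective hΦ atTop _
    simpa only [AlgHom.toLinearMap_apply, map_pow] using h.symm.norm_left.norm_right
  have hspec : spectrum ℂ ((φ : V →ₗ[ℝ] V).baseChange ℂ) = spectrum ℂ (Φ φ) :=
    spectrum_baseChange_eq_spectrum_map_toMatrix b _
  rw [specRadR_eq_toReal_spectralRadius, spectralRadius, hspec]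
  exact tendsto_rpow_inv_of_isTheta (fun _ => norm_nonneg _) (fun _ => norm_nonneg _) hΘ
    (tendsto_norm_pow_rpow_inv_toReal_spectralRadius (Φ φ))

end

section Cone

variable {V : Type*} [NormedAddCommGroup V] [NormedSpace ℝ V] {C : Set V}

theorem exists_pos_mul_norm_le_of_pos_on_cone [FiniteDimensional ℝ V] (hC : IsClosed C)
    (hsmul : ∀ r : ℝ, 0 < r → ∀ x ∈ C, r • x ∈ C) {χ : V →ₗ[ℝ] ℝ}
    (hχ : ∀ x ∈ C, x ≠ 0 → 0 < χ x) : ∃ δ > 0, ∀ x ∈ C, δ * ‖x‖ ≤ χ x := by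
  obtain ⟨δ, hδ, hδχ⟩ := ((isCompact_sphere (0 : V) 1).inter_left hC).exists_forall_le'
    (LinearMap.continuous_of_finiteDimensional χ).continuousOn
    fun x hx => hχ x hx.1 (ne_zero_of_mem_unit_sphere ⟨x, hx.2⟩)
  refine ⟨δ, hδ, fun x hx => ?_⟩
  rcases eq_or_ne x 0 with rfl | hx0
  · simp
  have hpos : 0 < ‖x‖ := norm_pos_iff.2 hx0
  have := hδχ (‖x‖⁻¹ • x) ⟨hsmul _ (inv_pos.2 hpos) x hx, by simp [norm_smul, hpos.ne']⟩
  rwa [map_smul, smul_eq_mul, le_inv_mul_iff₀ hpos, mul_comm] at this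

variable {χ : V →ₗ[ℝ] ℝ} {δ : ℝ}

theorem mul_norm_le_of_add_mem_of_sub_mem (hδχ : ∀ x ∈ C, δ * ‖x‖ ≤ χ x) (hδ : 0 ≤ δ)
    {ψ : V →ₗ[ℝ] V} (hψ : Set.MapsTo ψ C C) {u x : V} (hplus : u + x ∈ C)
    (hminus : u - x ∈ C) : δ * ‖ψ x‖ ≤ χ (ψ u) := by
  have hsplit : (2 : ℝ) • ψ x = ψ (u + x) - ψ (u - x) := by
    rw [map_add, map_sub]; module
  have hsum : χ (ψ (u + x)) + χ (ψ (u - x)) = 2 * χ (ψ u) := by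
    rw [← map_add, ← map_add, add_add_sub_cancel, ← two_smul ℝ, map_smul, map_smul, smul_eq_mul]
  have htri : 2 * ‖ψ x‖ ≤ ‖ψ (u + x)‖ + ‖ψ (u - x)‖ := by
    calc 2 * ‖ψ x‖ = ‖(2 : ℝ) • ψ x‖ := by simp [norm_smul]
      _ ≤ ‖ψ (u + x)‖ + ‖ψ (u - x)‖ := hsplit ▸ norm_sub_le _ _
  nlinarith [hδχ _ (hψ hplus), hδχ _ (hψ hminus)]

theorem mul_opNorm_le_of_closedBall_subset (hδχ : ∀ x ∈ C, δ * ‖x‖ ≤ χ x) (hδ : 0 < δ)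
    {u : V} {ε : ℝ} (hε : 0 < ε) (hball : Metric.closedBall u ε ⊆ C) {ψ : V →L[ℝ] V}
    (hψ : Set.MapsTo ψ C C) :
    δ * ε * ‖ψ‖ ≤ χ (ψ u) := by
  have hu : u ∈ C := hball (Metric.mem_closedBall_self hε.le)
  have hnonneg : 0 ≤ χ (ψ u) := (mul_nonneg hδ.le (norm_nonneg _)).trans (hδχ _ (hψ hu))
  rw [mul_assoc, ← le_div_iff₀' hδ, ← le_div_iff₀' hε]
  refine ψ.opNorm_le_bound (by positivity) fun x => ?_
  rcases eq_or_ne x 0 with rfl | hx0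
  · simp
  have hpos : 0 < ‖x‖ := norm_pos_iff.2 hx0
  set y := (ε / ‖x‖) • x
  have hy : ‖y‖ = ε := by simp [y, norm_smul, abs_of_pos hε, hpos.ne']
  have key := mul_norm_le_of_add_mem_of_sub_mem hδχ hδ.le (ψ := ψ.toLinearMap) hψ (u := u)
    (x := y) (hball (by simp [dist_eq_norm, hy])) (hball (by simp [hy]))
  simp only [ContinuousLinearMap.coe_coe, y, map_smul, norm_smul, Real.norm_eq_abs,
    abs_of_pos (div_pos hε hpos)] at key
  rw [div_div, div_mul_eq_mul_div, le_div_iff₀ (by positivity)]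
  field_simp at key
  linarith

end Cone

theorem stmt4_general {V : Type*} [NormedAddCommGroup V] [NormedSpace ℝ V] [FiniteDimensional ℝ V]
    (C : Set V) (hC : IsClosed C)
    (hsmul : ∀ (r : ℝ), 0 < r → ∀ x ∈ C, r • x ∈ C)
    (φ : Module.End ℝ V) (hφ : Set.MapsTo φ C C)
    (χ : V →ₗ[ℝ] ℝ) (hχ : ∀ x ∈ C, x ≠ 0 → 0 < χ x)
    (u : V) (hu : u ∈ interior C) :
    Tendsto (fun m : ℕ => ‖(φ ^ m) u‖ ^ ((m : ℝ)⁻¹)) atTop (nhds (specRadR φ)) ∧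
    Tendsto (fun m : ℕ => (χ ((φ ^ m) u)) ^ ((m : ℝ)⁻¹)) atTop (nhds (specRadR φ)) := by
  obtain ⟨δ, hδ, hδχ⟩ := exists_pos_mul_norm_le_of_pos_on_cone hC hsmul hχ
  obtain ⟨ε, hε, hball⟩ := Metric.nhds_basis_closedBall.mem_iff.1 (mem_interior_iff_mem_nhds.1 hu)
  let ψ := Module.End.toContinuousLinearMap V φ
  have hψ : ∀ m, Set.MapsTo ⇑(ψ ^ m) C C := fun m => by
    rw [FunLike.coe_pow_eq_iterate]; exact hφ.iterate m
  have hψu : ∀ m, (ψ ^ m) u = (φ ^ m) u := fun m => by rw [← map_pow]; rfl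
  have hχ0 : ∀ m, 0 ≤ χ ((φ ^ m) u) := fun m =>
    (mul_nonneg hδ.le (norm_nonneg _)).trans (hδχ _ (hψu m ▸ hψ m (interior_subset hu)))
  have hopχ : (fun m => ‖ψ ^ m‖) =O[atTop] fun m => χ ((φ ^ m) u) :=
    IsBigO.of_bound (δ * ε)⁻¹ <| .of_forall fun m => by
      rw [norm_norm, Real.norm_of_nonneg (hχ0 m), ← hψu, le_inv_mul_iff₀ (by positivity)]
      exact mul_opNorm_le_of_closedBall_subset hδχ hδ hε hball (hψ m)
  have hχnorm : (fun m => χ ((φ ^ m) u)) =O[atTop] fun m => ‖(φ ^ m) u‖ :=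
    ((LinearMap.toContinuousLinearMap χ).isBigO_comp (fun m => (φ ^ m) u) atTop).norm_right
  have hnormop : (fun m => ‖(φ ^ m) u‖) =O[atTop] fun m => ‖ψ ^ m‖ :=
    IsBigO.of_bound ‖u‖ <| .of_forall fun m => by
      rw [norm_norm, norm_norm, ← hψu, mul_comm]
      exact (ψ ^ m).le_opNorm u
  have hρ : Tendsto (fun m : ℕ => ‖ψ ^ m‖ ^ (m : ℝ)⁻¹) atTop (𝓝 (specRadR φ)) :=
    ψ.tendsto_norm_pow_rpow_inv_specRadR
  exact ⟨tendsto_rpow_inv_of_isTheta (fun _ => norm_nonneg _) (fun _ => norm_nonneg _)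
      ⟨hnormop, hopχ.trans hχnorm⟩ hρ,
    tendsto_rpow_inv_of_isTheta hχ0 (fun _ => norm_nonneg _)
      ⟨hχnorm.trans hnormop, hopχ⟩ hρ⟩

/-- Let `C` be a closed strictly convex cone with `C - C = V` in a
finite-dimensional real vector space `V`, and `φ` linear with `φ(C) ⊆ C`.  For any norm,
any linear form `χ` positive on `C \ {0}`, and any `u` in the interior of `C`,
`ρ(φ) = lim ‖φ^m u‖^{1/m} = lim χ(φ^m u)^{1/m}`. -/
theorem stmt4 {V : Type*} [NormedAddCommGroup V] [NormedSpace ℝ V] [FiniteDimensional ℝ V]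
    (C : Set V) (hC : IsClosed C)
    (hadd : ∀ x ∈ C, ∀ y ∈ C, x + y ∈ C)
    (hsmul : ∀ (r : ℝ), 0 < r → ∀ x ∈ C, r • x ∈ C)
    (hstrict : ∀ x ∈ C, -x ∈ C → x = 0)
    (hgen : ∀ v : V, ∃ x ∈ C, ∃ y ∈ C, v = x - y)
    (φ : Module.End ℝ V) (hφ : Set.MapsTo φ C C)
    (χ : V →ₗ[ℝ] ℝ) (hχ : ∀ x ∈ C, x ≠ 0 → 0 < χ x)
    (u : V) (hu : u ∈ interior C) :
    Tendsto (fun m : ℕ => ‖(φ ^ m) u‖ ^ ((m : ℝ)⁻¹)) atTop (nhds (specRadR φ)) ∧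
    Tendsto (fun m : ℕ => (χ ((φ ^ m) u)) ^ ((m : ℝ)⁻¹)) atTop (nhds (specRadR φ)) :=
  stmt4_general C hC hsmul φ hφ χ hχ u hu
end

section
/- Let G be a group and ρ : G → GL(V) a representation on a finite-dimensional complex vector space V. If there is a uniform bound M such that every element of the image ρ(G) has finite order at most M, then the image ρ(G) is a finite group (Burnside's theorem on torsion linear groups of bounded exponent). -/
/-!
With `N = M!`, every `ρ g` satisfies `ρ g ^ N = 1`, so it is diagonalizable with `N`-th roots of
unity as eigenvalues. Hence its trace, a sum of `dim V` such roots, takes only finitely many values,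
and it equals `dim V` only when all eigenvalues are `1`, i.e. when `ρ g = 1`.

Pick elements `h₁, …, hₖ` of the image spanning its linear span in `End V`. On the image, the map
`x ↦ (tr (hᵢ x))ᵢ` has finitely many values, and it is injective: if `x` and `y` have the same
values then, by linearity in the `hᵢ`, `tr (x⁻¹ y) = tr (x⁻¹ x) = dim V`, so `x = y`.
-/

open Module Polynomial

lemma Complex.eq_one_of_norm_le_one_of_sum_eq_card {s : Multiset ℂ} (hs : ∀ z ∈ s, ‖z‖ ≤ 1)
    (hsum : s.sum = s.card) : ∀ z ∈ s, z = 1 := by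
  have hre : ∀ z ∈ s, z.re = 1 := by
    by_contra! ⟨z, hz, hz1⟩
    have hlt : (s.map re).sum < (s.map fun _ => (1 : ℝ)).sum :=
      Multiset.sum_lt_sum (fun w hw => (re_le_norm w).trans (hs w hw))
        ⟨z, hz, lt_of_le_of_ne ((re_le_norm z).trans (hs z hz)) hz1⟩
    have hre_sum : (s.map re).sum = s.card := by
      rw [← coe_reAddGroupHom, ← map_multiset_sum, hsum]
      simp
    simp [hre_sum] at hlt
  intro z hz
  have hnorm : ‖z‖ = 1 := le_antisymm (hs z hz) (hre z hz ▸ re_le_norm z)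
  exact ext (hre z hz) (abs_re_eq_norm.mp (by rw [hre z hz, hnorm, abs_one]))

namespace Module.End

variable {K V : Type*} [Field K] [AddCommGroup V] [Module K V] {f : End K V} {N : ℕ}

lemma HasEigenvalue.pow_eq_one_of_pow_eq_one {μ : K} (hμ : f.HasEigenvalue μ) (hf : f ^ N = 1) :
    μ ^ N = 1 := by
  obtain ⟨v, hv⟩ := hμ.exists_hasEigenvector
  have hv' : (μ ^ N) • v = (1 : K) • v := by rw [← hv.pow_apply, hf, one_smul, one_apply]
  exact smul_left_injective K hv.2 hv'

variable [FiniteDimensional K V]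

lemma pow_eq_one_of_mem_roots_charpoly (hf : f ^ N = 1) {μ : K} (hμ : μ ∈ f.charpoly.roots) :
    μ ^ N = 1 :=
  ((hasEigenvalue_iff_isRoot_charpoly f μ).mpr
    (isRoot_of_mem_roots hμ)).pow_eq_one_of_pow_eq_one hf

lemma card_roots_charpoly [IsAlgClosed K] (f : End K V) :
    f.charpoly.roots.card = finrank K V := by
  rw [← (IsAlgClosed.splits f.charpoly).natDegree_eq_card_roots, LinearMap.charpoly_natDegree]

lemma finite_trace_image_setOf_pow_eq_one [IsAlgClosed K] (hN : N ≠ 0) :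
    (LinearMap.trace K V '' {f | f ^ N = 1}).Finite := by
  classical
  refine (((nthRootsFinset N (1 : K)).sym (finrank K V)).finite_toSet.image
    fun s : Sym K (finrank K V) => (s : Multiset K).sum).subset ?_
  rintro _ ⟨f, hf, rfl⟩
  refine ⟨⟨f.charpoly.roots, card_roots_charpoly f⟩, ?_, ?_⟩
  · exact Finset.mem_sym_iff.mpr fun μ hμ =>
      (mem_nthRootsFinset (Nat.pos_of_ne_zero hN) 1).mpr (pow_eq_one_of_mem_roots_charpoly hf hμ)
  · exact (trace_eq_sum_roots_charpoly_of_splits (IsAlgClosed.splits _)).symm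

lemma eq_one_of_pow_eq_one_of_forall_hasEigenvalue [IsAlgClosed K] [CharZero K] (hN : N ≠ 0)
    (hf : f ^ N = 1) (h : ∀ μ, f.HasEigenvalue μ → μ = 1) : f = 1 := by
  have hss : f.IsSemisimple := isSemisimple_of_squarefree_aeval_eq_zero
    (separable_X_pow_sub_C 1 (by exact_mod_cast hN) one_ne_zero).squarefree (by simp [hf])
  have hss' : (f - (1 : K) • LinearMap.id).IsSemisimple := by
    simpa [← one_eq_id] using isSemisimple_sub_algebraMap_iff (μ := (1 : K)) |>.mpr hss
  have hzero := hss'.eq_zero_iff_forall_eigenvalue.mpr fun μ hμ => by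
    simpa using h _ (hasEigenvalue_sub_iff.mp hμ)
  simpa [← one_eq_id, sub_eq_zero] using hzero

end Module.End

namespace Module.End

variable {V : Type*} [AddCommGroup V] [Module ℂ V] [FiniteDimensional ℂ V]

lemma eq_one_of_pow_eq_one_of_trace_eq_finrank {f : End ℂ V} {N : ℕ} (hN : N ≠ 0)
    (hf : f ^ N = 1) (htr : f.trace ℂ V = finrank ℂ V) : f = 1 := by
  have hroots : ∀ μ ∈ f.charpoly.roots, μ = 1 := by
    refine Complex.eq_one_of_norm_le_one_of_sum_eq_card (fun μ hμ =>
      (Complex.norm_eq_one_of_pow_eq_one (pow_eq_one_of_mem_roots_charpoly hf hμ) hN).le) ?_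
    rw [← trace_eq_sum_roots_charpoly_of_splits (IsAlgClosed.splits _), htr, card_roots_charpoly]
  refine eq_one_of_pow_eq_one_of_forall_hasEigenvalue hN hf fun μ hμ => hroots μ ?_
  exact (mem_roots f.charpoly_monic.ne_zero).mpr ((hasEigenvalue_iff_isRoot_charpoly f μ).mp hμ)

end Module.End

theorem Subgroup.finite_of_finite_trace_of_trace_eq_finrank {K V : Type*} [Field K]
    [AddCommGroup V] [Module K V] [FiniteDimensional K V] (H : Subgroup (V →ₗ[K] V)ˣ)
    (htr : ((fun h : (V →ₗ[K] V)ˣ => LinearMap.trace K V h) '' H).Finite)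
    (hone : ∀ h ∈ H, LinearMap.trace K V h = finrank K V → h = 1) :
    (H : Set (V →ₗ[K] V)ˣ).Finite := by
  obtain ⟨b, hbH, hspan, hli⟩ := exists_linearIndependent K (Units.val '' (H : Set (V →ₗ[K] V)ˣ))
  have : Finite b := hli.setFinite
  let τ : (V →ₗ[K] V)ˣ → b → K := fun x z => LinearMap.trace K V (z * x)
  refine Set.Finite.of_finite_image (f := τ) ((Set.Finite.pi fun _ : b => htr).subset ?_) ?_
  · rintro _ ⟨x, hx, rfl⟩ z -
    obtain ⟨y, hy, hyz⟩ := hbH z.2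
    exact ⟨y * x, H.mul_mem hy hx, by simp [τ, hyz]⟩
  · intro x hx y hy hxy
    have heq : Set.EqOn (LinearMap.trace K V ∘ₗ LinearMap.mulRight K (x : V →ₗ[K] V))
        (LinearMap.trace K V ∘ₗ LinearMap.mulRight K (y : V →ₗ[K] V)) b :=
      fun z hz => congrFun hxy ⟨z, hz⟩
    have hinv : ((x⁻¹ : (V →ₗ[K] V)ˣ) : V →ₗ[K] V) ∈ Submodule.span K b := by
      rw [hspan]; exact Submodule.subset_span ⟨x⁻¹, H.inv_mem hx, rfl⟩
    have htr1 := LinearMap.eqOn_span' heq hinv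
    simp only [LinearMap.coe_comp, Function.comp_apply, LinearMap.mulRight_apply, ← Units.val_mul,
      inv_mul_cancel, Units.val_one, LinearMap.trace_one] at htr1
    exact inv_mul_eq_one.mp (hone _ (H.mul_mem (H.inv_mem hx) hy) htr1.symm)

/-- Burnside.  Let `ρ : G → GL(V)` be a representation of a group `G`
on a finite-dimensional complex vector space.  If every element of the image has finite
order bounded by a uniform constant `M`, then the image of `ρ` is finite. -/
theorem stmt14 {G V : Type*} [Group G] [AddCommGroup V] [Module ℂ V]
    [FiniteDimensional ℂ V]
    (ρ : G →* (V →ₗ[ℂ] V)ˣ) (M : ℕ)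
    (hord : ∀ g : G, 0 < orderOf (ρ g) ∧ orderOf (ρ g) ≤ M) :
    (Set.range (fun g : G => ρ g)).Finite := by
  have hN : M.factorial ≠ 0 := M.factorial_ne_zero
  have hpow : ∀ h ∈ ρ.range, (h : V →ₗ[ℂ] V) ^ M.factorial = 1 := by
    rintro _ ⟨g, rfl⟩
    rw [← Units.val_pow_eq_pow_val,
      orderOf_dvd_iff_pow_eq_one.mp (Nat.dvd_factorial (hord g).1 (hord g).2), Units.val_one]
  rw [← MonoidHom.coe_range]
  refine ρ.range.finite_of_finite_trace_of_trace_eq_finrank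
    ((Module.End.finite_trace_image_setOf_pow_eq_one (V := V) hN).subset ?_) fun h hh htr => ?_
  · rintro _ ⟨h, hh, rfl⟩
    exact ⟨h, hpow h hh, rfl⟩
  · exact Units.val_eq_one.mp
      (Module.End.eq_one_of_pow_eq_one_of_trace_eq_finrank hN (hpow h hh) htr)
end
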